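/- The quaternion matrix equation AX - XB = C has a solution if and only if the quaternion block matrices [[A, C], [0, B]] and [[A, 0], [0, B]] are similar over ℍ. -/

import Mathlib

/-!
Let `M = [[A, C], [0, B]]`, `N = [[A, 0], [0, B]]` and `E = [[0, 0], [0, 1]]`, and let `p` be left
multiplication by `E`. If `M` and `N` are similar, then the spaces `{Z | M Z = Z N}` and
`{Z | N Z = Z N}` have the same (real) dimension. They meet `ker p` in the same subspace, and `p`
maps the first into the second, so by counting dimensions `p` maps them onto the same subspace.
Since `E` commutes with `N`, `E = p E` lies in that image, so some `Z` with `M Z = Z N` has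
`E Z = E`: its lower right block is `1`, and the upper right block of `M Z = Z N` then says
that minus the upper right block of `Z` solves `A X - X B = C`.
-/

open Matrix Quaternion Module LinearMap

theorem Submodule.finrank_map_add_finrank_inf_ker {K V V' : Type*} [DivisionRing K]
    [AddCommGroup V] [Module K V] [AddCommGroup V'] [Module K V'] (U : Submodule K V)
    [FiniteDimensional K U] (p : V →ₗ[K] V') :
    finrank K (U.map p) + finrank K ↥(U ⊓ ker p) = finrank K U := by
  have h := (p.domRestrict U).finrank_range_add_finrank_ker
  rw [LinearMap.range_domRestrict, LinearMap.ker_domRestrict] at h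
  rwa [← Submodule.map_comap_subtype, Submodule.finrank_map_subtype_eq]

theorem Submodule.map_eq_of_map_le_of_inf_ker_eq {K V V' : Type*} [DivisionRing K]
    [AddCommGroup V] [Module K V] [AddCommGroup V'] [Module K V'] [FiniteDimensional K V]
    {U W : Submodule K V} {p : V →ₗ[K] V'} (hrank : finrank K U = finrank K W)
    (hker : U ⊓ ker p = W ⊓ ker p) (hle : U.map p ≤ W.map p) :
    U.map p = W.map p := by
  refine Submodule.eq_of_le_of_finrank_eq hle ?_
  have hU := U.finrank_map_add_finrank_inf_ker p
  have hW := W.finrank_map_add_finrank_inf_ker p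
  rw [hker, hrank] at hU
  omega

section Intertwiners

variable (K : Type*) {𝒜 : Type*} [Field K] [Ring 𝒜] [Algebra K 𝒜]

def intertwiners (M N : 𝒜) : Submodule K 𝒜 :=
  ker (mulLeft K M - mulRight K N)

variable {K}

theorem mem_intertwiners {M N Z : 𝒜} : Z ∈ intertwiners K M N ↔ M * Z = Z * N := by
  simp [intertwiners, sub_eq_zero]

theorem map_intertwiners_self_of_mul_eq (u : 𝒜ˣ) {M N : 𝒜} (h : M * u = u * N) :
    (intertwiners K N N).map (DistribMulAction.toLinearEquiv K 𝒜 u : 𝒜 →ₗ[K] 𝒜) =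
      intertwiners K M N := by
  have h' : N * ↑u⁻¹ = ↑u⁻¹ * M := by
    rw [Units.eq_inv_mul_iff_mul_eq, ← mul_assoc, ← h, Units.mul_inv_cancel_right]
  ext Z
  rw [Submodule.mem_map_equiv, mem_intertwiners, mem_intertwiners]
  change N * (↑u⁻¹ * Z) = ↑u⁻¹ * Z * N ↔ _
  rw [← mul_assoc, h', mul_assoc, mul_assoc]
  exact ⟨fun hZ => by simpa using congrArg (u.val * ·) hZ, fun hZ => by rw [hZ]⟩

theorem finrank_intertwiners_eq_of_mul_eq {M N S : 𝒜} (hS : IsUnit S) (h : M * S = S * N) :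
    finrank K (intertwiners K M N) = finrank K (intertwiners K N N) := by
  obtain ⟨u, rfl⟩ := hS
  rw [← map_intertwiners_self_of_mul_eq u h, LinearEquiv.finrank_map_eq]

theorem exists_mem_intertwiners_mul_eq_of_mul_eq [FiniteDimensional K 𝒜] {M N E S : 𝒜}
    (hS : IsUnit S) (hMS : M * S = S * N) (hE : IsIdempotentElem E) (hEN : Commute E N)
    (hNE : N * E = E * M) (hME : (M - N) * E = M - N) :
    ∃ Z ∈ intertwiners K M N, E * Z = E := by
  let p := mulLeft K E
  have hker : intertwiners K M N ⊓ ker p = intertwiners K N N ⊓ ker p := by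
    ext Z
    simp only [Submodule.mem_inf, mem_intertwiners, mem_ker, mulLeft_apply, p]
    refine and_congr_left fun hZ => ?_
    have hMZ : M * Z = N * Z := by
      rw [← sub_eq_zero, ← sub_mul, ← hME, mul_assoc, hZ, mul_zero]
    rw [hMZ]
  have hle : (intertwiners K M N).map p ≤ (intertwiners K N N).map p := by
    rintro _ ⟨Z, hZ, rfl⟩
    rw [SetLike.mem_coe, mem_intertwiners] at hZ
    refine Submodule.mem_map.2 ⟨E * Z, mem_intertwiners.2 ?_, ?_⟩
    · rw [← mul_assoc, hNE, mul_assoc, hZ, mul_assoc]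
    · simp only [p, mulLeft_apply, ← mul_assoc, hE.eq]
  have hE_mem : E ∈ (intertwiners K N N).map p :=
    Submodule.mem_map.2 ⟨E, mem_intertwiners.2 hEN.symm.eq, hE.eq⟩
  have hrank := finrank_intertwiners_eq_of_mul_eq (K := K) hS hMS
  rw [← Submodule.map_eq_of_map_le_of_inf_ker_eq hrank hker hle] at hE_mem
  exact hE_mem

end Intertwiners

namespace Matrix

variable {ι κ R : Type*} [Fintype ι] [Fintype κ] [DecidableEq ι] [DecidableEq κ] [Ring R]

theorem isUnit_fromBlocks_one_zero_one (X : Matrix ι κ R) :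
    IsUnit (fromBlocks 1 X 0 1 : Matrix (ι ⊕ κ) (ι ⊕ κ) R) := by
  refine isUnit_iff_exists.2 ⟨fromBlocks 1 (-X) 0 1, ?_, ?_⟩ <;>
    simp [fromBlocks_multiply, ← fromBlocks_one]

theorem fromBlocks_mul_fromBlocks_one_neg_of_mul_sub_mul_eq {A : Matrix ι ι R}
    {B : Matrix κ κ R} {C X : Matrix ι κ R} (h : A * X - X * B = C) :
    fromBlocks A C 0 B * fromBlocks 1 (-X) 0 1 = fromBlocks 1 (-X) 0 1 * fromBlocks A 0 0 B := by
  simp [fromBlocks_multiply, ← h, sub_eq_add_neg]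

theorem exists_mul_sub_mul_eq_of_isUnit (K : Type*) [Field K] [Algebra K R]
    [FiniteDimensional K R] {A : Matrix ι ι R} {B : Matrix κ κ R} {C : Matrix ι κ R}
    {S : Matrix (ι ⊕ κ) (ι ⊕ κ) R} (hS : IsUnit S)
    (hMS : fromBlocks A C 0 B * S = S * fromBlocks A 0 0 B) :
    ∃ X : Matrix ι κ R, A * X - X * B = C := by
  let M := fromBlocks A C 0 B
  let N := fromBlocks A 0 0 B
  let E : Matrix (ι ⊕ κ) (ι ⊕ κ) R := fromBlocks 0 0 0 1
  have hE : IsIdempotentElem E := by simp [E, IsIdempotentElem, fromBlocks_multiply]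
  have hEN : Commute E N := by simp [E, N, Commute, SemiconjBy, fromBlocks_multiply]
  have hNE : N * E = E * M := by simp [E, M, N, fromBlocks_multiply]
  have hME : (M - N) * E = M - N := by
    simp [E, M, N, fromBlocks_multiply, fromBlocks_neg, sub_eq_add_neg, fromBlocks_add]
  obtain ⟨Z, hZ, hEZ⟩ := exists_mem_intertwiners_mul_eq_of_mul_eq (K := K) hS hMS hE hEN hNE hME
  obtain ⟨P, Q, R', T, hZ_blocks⟩ : ∃ P Q R' T, Z = fromBlocks P Q R' T :=
    ⟨_, _, _, _, (fromBlocks_toBlocks Z).symm⟩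
  rw [mem_intertwiners, hZ_blocks] at hZ
  rw [hZ_blocks] at hEZ
  simp only [E, fromBlocks_multiply, fromBlocks_inj] at hZ hEZ
  obtain ⟨-, hQ, -, -⟩ := hZ
  obtain ⟨-, -, -, hT⟩ := hEZ
  simp only [Matrix.zero_mul, Matrix.mul_zero, Matrix.one_mul, zero_add] at hQ hT
  rw [hT, Matrix.mul_one] at hQ
  exact ⟨-Q, by rw [Matrix.mul_neg, Matrix.neg_mul, ← hQ]; abel⟩

theorem exists_mul_sub_mul_eq_iff (K : Type*) [Field K] [Algebra K R] [FiniteDimensional K R]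
    (A : Matrix ι ι R) (B : Matrix κ κ R) (C : Matrix ι κ R) :
    (∃ X : Matrix ι κ R, A * X - X * B = C) ↔
      ∃ S, IsUnit S ∧ fromBlocks A C 0 B * S = S * fromBlocks A 0 0 B :=
  ⟨fun ⟨X, hX⟩ => ⟨_, isUnit_fromBlocks_one_zero_one (-X),
    fromBlocks_mul_fromBlocks_one_neg_of_mul_sub_mul_eq hX⟩,
   fun ⟨_, hS, hMS⟩ => exists_mul_sub_mul_eq_of_isUnit K hS hMS⟩

end Matrix

theorem roth_quaternion {m n : ℕ}
    (A : Matrix (Fin m) (Fin m) ℍ[ℝ]) (B : Matrix (Fin n) (Fin n) ℍ[ℝ])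
    (C : Matrix (Fin m) (Fin n) ℍ[ℝ]) :
    (∃ X : Matrix (Fin m) (Fin n) ℍ[ℝ], A * X - X * B = C) ↔
    (∃ S : Matrix (Fin m ⊕ Fin n) (Fin m ⊕ Fin n) ℍ[ℝ], IsUnit S ∧
      fromBlocks A C 0 B * S = S * fromBlocks A 0 0 B) :=
  exists_mul_sub_mul_eq_iff ℝ A B C
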